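/- arXiv:1607.06406 — 8 statements merged into one kernel-verified Lean document; each statement's English description precedes it below -/
import Mathlib

section
/- Let H be a complex inner product space, A : H →L[ℂ] H a bounded self-adjoint operator, and φ ∈ H a unit vector that is not an eigenvector of A, i.e. A φ ≠ ⟨φ, A φ⟩ • φ. Then for every w ∈ ℂ there exists φ' ∈ H with ⟨φ', φ⟩ ≠ 0 and ⟨φ', A φ⟩ = w * ⟨φ', φ⟩. In other words, the weak value ⟨φ', A φ⟩ / ⟨φ', φ⟩ of A for the pre-selected state φ attains every complex number for a suitable choice of the post-selected state φ'. -/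
local notation "⟪" x ", " y "⟫" => @inner ℂ _ _ x y

/-- The weak value `⟪φ', A φ⟫ / ⟪φ', φ⟫` of a bounded self-adjoint operator `A`
for a pre-selected unit vector `φ` which is not an eigenvector of `A` attains
every complex number for a suitable post-selected state `φ'`. -/
theorem stmt_1 {H : Type*} [NormedAddCommGroup H] [InnerProductSpace ℂ H]
    (A : H →L[ℂ] H) (hA : ∀ ξ η : H, ⟪A ξ, η⟫ = ⟪ξ, A η⟫)
    (φ : H) (hφ : ‖φ‖ = 1) (hev : A φ ≠ ⟪φ, A φ⟫ • φ) :
    ∀ w : ℂ, ∃ φ' : H, ⟪φ', φ⟫ ≠ 0 ∧ ⟪φ', A φ⟫ = w * ⟪φ', φ⟫ := by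
  intro w
  set a : ℂ := ⟪φ, A φ⟫ with ha
  set ψ : H := A φ - a • φ with hψdef
  have hψ : ψ ≠ 0 := sub_ne_zero.mpr hev
  have hφφ : ⟪φ, φ⟫ = 1 := by
    rw [inner_self_eq_norm_sq_to_K, hφ]; norm_num
  have hψφ : ⟪ψ, φ⟫ = 0 := by
    rw [hψdef, inner_sub_left, inner_smul_left, hφφ, mul_one, ha,
      ← inner_conj_symm φ (A φ), Complex.conj_conj]
    ring
  have hψA : ⟪ψ, A φ⟫ = (‖ψ‖ : ℂ) ^ 2 := by
    have : A φ = ψ + a • φ := by rw [hψdef]; abel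
    rw [this, inner_add_right, inner_smul_right, hψφ, mul_zero, add_zero,
      inner_self_eq_norm_sq_to_K]
    norm_num
  have hn : (‖ψ‖ : ℂ) ^ 2 ≠ 0 := by
    simp [pow_eq_zero_iff, hψ]
  set c : ℂ := starRingEnd ℂ ((w - a) / (‖ψ‖ : ℂ) ^ 2) with hc
  refine ⟨φ + c • ψ, ?_, ?_⟩
  · rw [inner_add_left, inner_smul_left, hψφ, mul_zero, add_zero, hφφ]
    exact one_ne_zero
  · rw [inner_add_left, inner_smul_left, hψA, inner_add_left, inner_smul_left,
      hψφ, mul_zero, add_zero, hφφ, mul_one, hc, Complex.conj_conj,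
      div_mul_cancel₀ _ hn, ← ha]
    ring
end

section
/- Let H be a complex inner product space, A : H →L[ℂ] H a bounded self-adjoint operator, and φ ∈ H a unit vector that is not an eigenvector of A, i.e. A φ ≠ ⟨φ, A φ⟩ • φ. Then for every r ∈ ℝ there exists φ' ∈ H with ⟨φ', φ⟩ ≠ 0 such that (1/2) * (⟨φ', A φ⟩ / ⟨φ', φ⟩ + ⟨φ, A φ'⟩ / ⟨φ, φ'⟩) = (r : ℂ). In other words, the α = 0 two-state value, which equals the real part of the weak value ⟨φ', A φ⟩ / ⟨φ', φ⟩, attains every real number for a suitable choice of φ'. -/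
local notation "⟪" x ", " y "⟫" => @inner ℂ _ _ x y

/-!
For self-adjoint `A` the two-state value is the real part of the weak value `⟪φ', A φ⟫ / ⟪φ', φ⟫`.
Let `ψ := A φ - ⟪φ, A φ⟫ • φ`, which is orthogonal to `φ` and nonzero since `φ` is not an
eigenvector. For real `t` the post-selection `φ' := φ + t • ψ` has `⟪φ', φ⟫ = 1` and weak value
`⟪φ, A φ⟫ + t ‖ψ‖ ^ 2`, whose real part sweeps out all of `ℝ` as `t` varies.
-/

open scoped ComplexConjugate

section

variable {𝕜 E : Type*} [RCLike 𝕜] [NormedAddCommGroup E] [InnerProductSpace 𝕜 E]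

theorem inner_sub_inner_smul_of_norm_eq_one {φ : E} (hφ : ‖φ‖ = 1) (v : E) :
    inner 𝕜 φ (v - inner 𝕜 φ v • φ) = 0 := by
  rw [inner_sub_right, inner_smul_right, inner_self_eq_norm_sq_to_K, hφ]
  simp

theorem LinearMap.IsSymmetric.inner_div_add_inner_div_eq_re {T : E →ₗ[𝕜] E}
    (hT : T.IsSymmetric) (φ φ' : E) :
    inner 𝕜 φ' (T φ) / inner 𝕜 φ' φ + inner 𝕜 φ (T φ') / inner 𝕜 φ φ' =
      2 * RCLike.re (inner 𝕜 φ' (T φ) / inner 𝕜 φ' φ) := by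
  rw [← RCLike.add_conj, map_div₀, inner_conj_symm, inner_conj_symm, hT]

theorem exists_re_inner_div_eq {φ : E} (hφ : ‖φ‖ = 1) {v : E} (hv : v ≠ inner 𝕜 φ v • φ)
    (r : ℝ) : ∃ φ' : E, inner 𝕜 φ' φ ≠ 0 ∧ RCLike.re (inner 𝕜 φ' v / inner 𝕜 φ' φ) = r := by
  set ψ := v - inner 𝕜 φ v • φ
  have hψ : ‖ψ‖ ≠ 0 := norm_ne_zero_iff.mpr (sub_ne_zero.mpr hv)
  have hψφ : inner 𝕜 ψ φ = 0 := by
    rw [← inner_conj_symm, inner_sub_inner_smul_of_norm_eq_one hφ, map_zero]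
  have hψv : inner 𝕜 ψ v = (‖ψ‖ : 𝕜) ^ 2 := by
    conv_lhs => rw [← sub_add_cancel v (inner 𝕜 φ v • φ)]
    rw [inner_add_right, inner_smul_right, hψφ, inner_self_eq_norm_sq_to_K, mul_zero, add_zero]
  set t := (r - RCLike.re (inner 𝕜 φ v)) / ‖ψ‖ ^ 2
  have hφ' : inner 𝕜 (φ + (t : 𝕜) • ψ) φ = 1 := by
    rw [inner_add_left, inner_smul_left, hψφ, inner_self_eq_norm_sq_to_K, hφ]
    simp
  have hv' : inner 𝕜 (φ + (t : 𝕜) • ψ) v = inner 𝕜 φ v + ((t * ‖ψ‖ ^ 2 : ℝ) : 𝕜) := by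
    rw [inner_add_left, inner_smul_left, hψv, RCLike.conj_ofReal]
    push_cast
    rfl
  refine ⟨φ + (t : 𝕜) • ψ, by simp [hφ'], ?_⟩
  rw [hφ', div_one, hv', map_add, RCLike.ofReal_re, div_mul_cancel₀ _ (pow_ne_zero 2 hψ),
    add_sub_cancel]

end

/-- The `α = 0` two-state value (the real part of the weak value) of a bounded
self-adjoint operator `A` for a pre-selected unit vector `φ` which is not an
eigenvector of `A` attains every real number for a suitable post-selection `φ'`. -/
theorem stmt_2 {H : Type*} [NormedAddCommGroup H] [InnerProductSpace ℂ H]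
    (A : H →L[ℂ] H) (hA : ∀ ξ η : H, ⟪A ξ, η⟫ = ⟪ξ, A η⟫)
    (φ : H) (hφ : ‖φ‖ = 1) (hev : A φ ≠ ⟪φ, A φ⟫ • φ) :
    ∀ r : ℝ, ∃ φ' : H, ⟪φ', φ⟫ ≠ 0 ∧
      (1 / 2 : ℂ) * (⟪φ', A φ⟫ / ⟪φ', φ⟫ + ⟪φ, A φ'⟫ / ⟪φ, φ'⟫) = (r : ℂ) := by
  intro r
  obtain ⟨φ', hφ'φ, hre⟩ := exists_re_inner_div_eq hφ hev r
  refine ⟨φ', hφ'φ, ?_⟩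
  have hsum := LinearMap.IsSymmetric.inner_div_add_inner_div_eq_re (T := (A : H →ₗ[ℂ] H)) hA φ φ'
  simp only [ContinuousLinearMap.coe_coe] at hsum
  rw [hsum, hre]
  simp
end

section
/- Let H be a complex inner product space, A : H →L[ℂ] H a bounded self-adjoint operator, and φ ∈ H a unit vector that is not an eigenvector of A, i.e. A φ ≠ ⟨φ, A φ⟩ • φ. Then for every α ∈ ℂ and every M ≥ 0 there exists φ' ∈ H with ⟨φ', φ⟩ ≠ 0 such that M ≤ ‖((1+α)/2) * (⟨φ', A φ⟩ / ⟨φ', φ⟩) + ((1-α)/2) * (⟨φ, A φ'⟩ / ⟨φ, φ'⟩)‖. That is, the conditional quasi-expectation of A given the rank-one conditioning observable B = |φ'⟩⟨φ'| (occurring with nonvanishing probability |⟨φ', φ⟩|² ≠ 0) can be made arbitrarily large in modulus by choosing φ'. -/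
local notation "⟪" x ", " y "⟫" => @inner ℂ _ _ x y

/-- The conditional quasi-expectation (two-state value with parameter `α`) of a
bounded self-adjoint operator `A` given a rank-one conditioning observable
`|φ'⟩⟨φ'|` can be made arbitrarily large in modulus by choosing `φ'`, provided
the unit vector `φ` is not an eigenvector of `A`. -/
theorem stmt_3 {H : Type*} [NormedAddCommGroup H] [InnerProductSpace ℂ H]
    (A : H →L[ℂ] H) (hA : ∀ ξ η : H, ⟪A ξ, η⟫ = ⟪ξ, A η⟫)
    (φ : H) (hφ : ‖φ‖ = 1) (hev : A φ ≠ ⟪φ, A φ⟫ • φ) :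
    ∀ (α : ℂ) (M : ℝ), 0 ≤ M → ∃ φ' : H, ⟪φ', φ⟫ ≠ 0 ∧
      M ≤ ‖((1 + α) / 2) * (⟪φ', A φ⟫ / ⟪φ', φ⟫) +
            ((1 - α) / 2) * (⟪φ, A φ'⟫ / ⟪φ, φ'⟫)‖ := by
  intro α M hM
  set c : ℂ := ⟪φ, A φ⟫ with hc
  set ψ : H := A φ - c • φ with hψdef
  have hψ0 : ψ ≠ 0 := sub_ne_zero.mpr hev
  have hcc : ⟪A φ, φ⟫ = c := hA φ φ
  have hcconj : (starRingEnd ℂ) c = c := by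
    rw [hc, ← inner_conj_symm]
    simpa using hcc
  have hφφ : ⟪φ, φ⟫ = 1 := by
    rw [@inner_self_eq_norm_sq_to_K ℂ, hφ]; norm_num
  have hψφ : ⟪ψ, φ⟫ = 0 := by
    rw [hψdef, inner_sub_left, inner_smul_left, hφφ, hcc, hcconj]; ring
  have hφψ : ⟪φ, ψ⟫ = 0 := by
    rw [← inner_conj_symm, hψφ]; simp
  have hAφ : A φ = ψ + c • φ := by rw [hψdef]; abel
  have hns : (‖ψ‖ : ℂ) ^ 2 = ⟪ψ, ψ⟫ := by
    rw [@inner_self_eq_norm_sq_to_K ℂ]; norm_num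
  have hψA : ⟪ψ, A φ⟫ = (‖ψ‖ : ℂ) ^ 2 := by
    rw [hAφ, inner_add_right, inner_smul_right, hψφ, hns]; ring
  have hAψ : ⟪A φ, ψ⟫ = (‖ψ‖ : ℂ) ^ 2 := by
    rw [← inner_conj_symm, hψA]
    simp
  have hn0 : (0:ℝ) < ‖ψ‖ ^ 2 := pow_pos (norm_pos_iff.mpr hψ0) 2
  set t : ℝ := (M + ‖c‖) / ‖ψ‖ ^ 2 with ht
  have ht0 : 0 ≤ t := by positivity
  refine ⟨φ + (t : ℂ) • ψ, ?_, ?_⟩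
  · rw [inner_add_left, inner_smul_left, hφφ, hψφ]
    norm_num
  · have h1 : ⟪φ + (t : ℂ) • ψ, φ⟫ = 1 := by
      rw [inner_add_left, inner_smul_left, hφφ, hψφ]; ring
    have h2 : ⟪φ, φ + (t : ℂ) • ψ⟫ = 1 := by
      rw [inner_add_right, inner_smul_right, hφφ, hφψ]; ring
    have h3 : ⟪φ + (t : ℂ) • ψ, A φ⟫ = c + t * ‖ψ‖ ^ 2 := by
      rw [inner_add_left, inner_smul_left, hψA, ← hc]
      rw [Complex.conj_ofReal]
    have h4 : ⟪φ, A (φ + (t : ℂ) • ψ)⟫ = c + t * ‖ψ‖ ^ 2 := by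
      rw [map_add, map_smul, inner_add_right, inner_smul_right, ← hA φ ψ, hAψ, ← hc]
    rw [h1, h2, h3, h4]
    have hE : ((1 + α) / 2) * ((c + t * ‖ψ‖ ^ 2) / 1) +
        ((1 - α) / 2) * ((c + t * ‖ψ‖ ^ 2) / 1) = c + t * ‖ψ‖ ^ 2 := by ring
    rw [hE]
    have hts : ‖((t : ℂ) * (‖ψ‖:ℂ) ^ 2)‖ = M + ‖c‖ := by
      have : ((t : ℂ) * (‖ψ‖:ℂ) ^ 2) = ((t * ‖ψ‖ ^ 2 : ℝ) : ℂ) := by push_cast; ring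
      rw [this, Complex.norm_real, Real.norm_eq_abs,
        abs_of_nonneg (by positivity)]
      rw [ht]
      field_simp
    have := norm_le_norm_add_norm_sub' ((t : ℂ) * (‖ψ‖:ℂ) ^ 2) (c + t * ‖ψ‖ ^ 2)
    have hsub : ((t : ℂ) * (‖ψ‖:ℂ) ^ 2) - (c + t * ‖ψ‖ ^ 2) = -c := by ring
    rw [hsub, hts, norm_neg] at this
    linarith
end

section
/- Fix d : ℕ, and work on ℝ^d (i.e. Fin d → ℝ) with Lebesgue measure. Let η : ℝ^d → ℂ be integrable with compact support and with total integral ∫ η = 1, and for t ≠ 0 set η_t(x) := |t|^(-d) • η(t⁻¹ • x). Then for every integrable f : ℝ^d → ℂ, the convolutions η_t ⋆ f converge to f in L¹ as t → 0: Tendsto (fun t => ∫ x, ‖(∫ y, η_t y * f (x - y)) - f x‖) (𝓝[≠] 0) (𝓝 0), where (η_t ⋆ f)(x) = ∫ y, η_t(y) * f(x - y) dy. That is, the scaled family {η_t} is an approximate identity for the convolution algebra L¹(ℝ^d). -/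
open MeasureTheory Filter Topology Module

/-!
Write `T v = ∫ ‖f (x - v) - f x‖` for the `L¹` distance between `f` and its translate by `v`;
`T` is continuous (translation is continuous on `L¹`), bounded by `2‖f‖₁` and vanishes at `0`.
Since `η_t` has unit mass, `η_t ⋆ f - f = ∫ η_t y (f (· - y) - f) dy`, so Minkowski's integral
inequality gives `‖η_t ⋆ f - f‖₁ ≤ ∫ ‖η_t y‖ T y dy = ∫ ‖η y‖ T (t y) dy`, and the right-hand side
tends to `0` by dominated convergence.
-/

section TranslationModulus

variable {G F : Type*} [AddGroup G] [MeasurableSpace G] [NormedAddCommGroup F] {μ : Measure G}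

variable (μ) in
noncomputable def translationModulus (f : G → F) (v : G) : ℝ := ∫ x, ‖f (x - v) - f x‖ ∂μ

lemma translationModulus_nonneg (f : G → F) (v : G) : 0 ≤ translationModulus μ f v :=
  integral_nonneg fun _ ↦ norm_nonneg _

@[simp]
lemma translationModulus_zero (f : G → F) : translationModulus μ f 0 = 0 := by
  simp [translationModulus]

lemma translationModulus_le [MeasurableAdd G] [μ.IsAddRightInvariant] {f : G → F}
    (hf : Integrable f μ) (v : G) :
    translationModulus μ f v ≤ 2 * ∫ x, ‖f x‖ ∂μ :=
  calc translationModulus μ f v ≤ ∫ x, (‖f (x - v)‖ + ‖f x‖) ∂μ :=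
        integral_mono ((hf.comp_sub_right v).sub hf).norm
          ((hf.comp_sub_right v).norm.add hf.norm) fun _ ↦ norm_sub_le _ _
    _ = 2 * ∫ x, ‖f x‖ ∂μ := by
        rw [integral_add (hf.comp_sub_right v).norm hf.norm,
          integral_sub_right_eq_self (fun x ↦ ‖f x‖) v]
        ring

lemma continuous_translationModulus [TopologicalSpace G] [IsTopologicalAddGroup G] [BorelSpace G]
    [μ.IsAddRightInvariant] [IsLocallyFiniteMeasure μ] [μ.InnerRegularCompactLTTop] {f : G → F}
    (hf : Integrable f μ) :
    Continuous (translationModulus μ f) := by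
  let φ : Lp F 1 μ := (memLp_one_iff_integrable.2 hf).toLp f
  let τ : G → C(G, G) := fun v ↦ ⟨fun x ↦ x - v, by fun_prop⟩
  have hτ : ∀ v, MeasurePreserving (τ v) μ μ := measurePreserving_sub_right μ
  have hτ_cont : Continuous τ :=
    ContinuousMap.continuous_of_continuous_uncurry _ (continuous_snd.sub continuous_fst)
  have hφ : ⇑φ =ᵐ[μ] f := MemLp.coeFn_toLp _
  have h_eq : ∀ v, translationModulus μ f v = ‖Lp.compMeasurePreserving (τ v) (hτ v) φ - φ‖ := by
    intro v
    have h_ae : ⇑(Lp.compMeasurePreserving (τ v) (hτ v) φ - φ) =ᵐ[μ] fun x ↦ f (x - v) - f x := by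
      filter_upwards [Lp.coeFn_sub (Lp.compMeasurePreserving (τ v) (hτ v) φ) φ,
        Lp.coeFn_compMeasurePreserving φ (hτ v),
        (hτ v).quasiMeasurePreserving.ae_eq_comp hφ, hφ] with x h₁ h₂ h₃ h₄
      rw [h₁, Pi.sub_apply, h₂, h₃, h₄]
      rfl
    rw [Lp.norm_def, eLpNorm_congr_ae h_ae, eLpNorm_one_eq_lintegral_enorm]
    exact integral_norm_eq_lintegral_enorm ((hf.comp_sub_right v).sub hf).aestronglyMeasurable
  rw [funext h_eq]
  exact ((continuous_const.compMeasurePreservingLp hτ_cont hτ ENNReal.one_ne_top).sub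
    continuous_const).norm

lemma integral_norm_convolution_sub_le [MeasurableAdd₂ G] [MeasurableNeg G] [SFinite μ]
    [μ.IsAddRightInvariant] {k f : G → ℂ} (hk : Integrable k μ) (hk_one : ∫ y, k y ∂μ = 1)
    (hf : Integrable f μ) :
    ∫ x, ‖(∫ y, k y * f (x - y) ∂μ) - f x‖ ∂μ ≤ ∫ y, ‖k y‖ * translationModulus μ f y ∂μ := by
  have h_int : Integrable (fun p : G × G ↦ k p.2 * (f (p.1 - p.2) - f p.1)) (μ.prod μ) := by
    have h_conv := hk.convolution_integrand (ContinuousLinearMap.mul ℝ ℂ) hf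
    have h_prod := hf.mul_prod hk
    refine (h_conv.sub h_prod).congr (.of_forall fun p ↦ ?_)
    simp [mul_sub, mul_comm]
  have h_ae : ∀ᵐ x ∂μ, (∫ y, k y * f (x - y) ∂μ) - f x = ∫ y, k y * (f (x - y) - f x) ∂μ := by
    filter_upwards [hk.ae_convolution_exists (L := ContinuousLinearMap.mul ℝ ℂ) hf] with x hx
    simp_rw [mul_sub]
    rw [integral_sub (by exact hx) (hk.mul_const (f x)), integral_mul_const, hk_one, one_mul]
  calc ∫ x, ‖(∫ y, k y * f (x - y) ∂μ) - f x‖ ∂μ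
      = ∫ x, ‖∫ y, k y * (f (x - y) - f x) ∂μ‖ ∂μ :=
        integral_congr_ae (by filter_upwards [h_ae] with x hx; rw [hx])
    _ ≤ ∫ x, ∫ y, ‖k y * (f (x - y) - f x)‖ ∂μ ∂μ :=
        integral_mono_of_nonneg (.of_forall fun _ ↦ norm_nonneg _)
          h_int.integral_norm_prod_left (.of_forall fun _ ↦ norm_integral_le_integral_norm _)
    _ = ∫ y, ∫ x, ‖k y * (f (x - y) - f x)‖ ∂μ ∂μ := integral_integral_swap h_int.norm
    _ = ∫ y, ‖k y‖ * translationModulus μ f y ∂μ := by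
        simp_rw [norm_mul, integral_const_mul, translationModulus]

end TranslationModulus

section Rescaling

variable {E : Type*} [NormedAddCommGroup E] [NormedSpace ℝ E] [FiniteDimensional ℝ E]
  [MeasurableSpace E] [BorelSpace E] {μ : Measure E} [μ.IsAddHaarMeasure]

lemma integral_abs_zpow_smul_comp_inv_smul {F : Type*} [NormedAddCommGroup F]
    [NormedSpace ℝ F] (g : E → F) {t : ℝ} (ht : t ≠ 0) :
    ∫ y, (|t| ^ (-(finrank ℝ E : ℤ))) • g (t⁻¹ • y) ∂μ = ∫ y, g y ∂μ := by
  rw [integral_smul, Measure.integral_comp_inv_smul, smul_smul, abs_pow, zpow_neg, zpow_natCast,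
    inv_mul_cancel₀ (pow_ne_zero _ (abs_ne_zero.2 ht)), one_smul]

lemma integral_norm_convolution_rescale_sub_le {η f : E → ℂ} (hη : Integrable η μ)
    (hη_one : ∫ y, η y ∂μ = 1) (hf : Integrable f μ) {t : ℝ} (ht : t ≠ 0) :
    ∫ x, ‖(∫ y, (|t| ^ (-(finrank ℝ E : ℤ))) • η (t⁻¹ • y) * f (x - y) ∂μ) - f x‖ ∂μ ≤
      ∫ y, ‖η y‖ * translationModulus μ f (t • y) ∂μ := by
  have hc : 0 ≤ |t| ^ (-(finrank ℝ E : ℤ)) := by positivity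
  refine (integral_norm_convolution_sub_le
    (k := fun y ↦ (|t| ^ (-(finrank ℝ E : ℤ))) • η (t⁻¹ • y))
    ((hη.comp_smul (inv_ne_zero ht)).smul (|t| ^ (-(finrank ℝ E : ℤ))))
    ((integral_abs_zpow_smul_comp_inv_smul η ht).trans hη_one) hf).trans_eq ?_
  rw [← integral_abs_zpow_smul_comp_inv_smul (fun y ↦ ‖η y‖ * translationModulus μ f (t • y)) ht]
  simp_rw [norm_smul, Real.norm_of_nonneg hc, smul_inv_smul₀ ht, smul_eq_mul, mul_assoc]

lemma tendsto_integral_mul_translationModulus_smul {F : Type*} [NormedAddCommGroup F]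
    {k : E → ℝ} (hk : Integrable k μ) {f : E → F} (hf : Integrable f μ) :
    Tendsto (fun t : ℝ ↦ ∫ y, k y * translationModulus μ f (t • y) ∂μ) (𝓝 0) (𝓝 0) := by
  have hT := continuous_translationModulus hf
  have h_lim : ∀ y, Tendsto (fun t : ℝ ↦ k y * translationModulus μ f (t • y)) (𝓝 0) (𝓝 0) := by
    intro y
    have h_smul : Tendsto (fun t : ℝ ↦ t • y) (𝓝 0) (𝓝 0) := by
      simpa using (tendsto_id (x := 𝓝 (0 : ℝ))).smul_const y
    simpa using ((hT.tendsto 0).comp h_smul).const_mul (k y)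
  simpa using tendsto_integral_filter_of_dominated_convergence
    (fun y ↦ ‖k y‖ * (2 * ∫ x, ‖f x‖ ∂μ))
    (.of_forall fun t ↦ hk.aestronglyMeasurable.mul
      (hT.comp (continuous_const_smul t)).aestronglyMeasurable)
    (.of_forall fun t ↦ .of_forall fun y ↦ by
      show ‖k y * translationModulus μ f (t • y)‖ ≤ _
      rw [norm_mul, Real.norm_of_nonneg (translationModulus_nonneg f _)]
      exact mul_le_mul_of_nonneg_left (translationModulus_le hf _) (norm_nonneg _))
    (hk.norm.mul_const _) (.of_forall h_lim)

end Rescaling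

theorem stmt_6_general (d : ℕ) (η : (Fin d → ℝ) → ℂ)
    (hη_int : Integrable η)
    (hη_one : (∫ x, η x) = 1) :
    ∀ f : (Fin d → ℝ) → ℂ, Integrable f →
      Tendsto (fun t : ℝ =>
          ∫ x, ‖(∫ y, (|t| ^ (-(d : ℤ))) • η (t⁻¹ • y) * f (x - y)) - f x‖)
        (𝓝[≠] (0 : ℝ)) (𝓝 0) := by
  intro f hf
  have h_bound : ∀ᶠ t in 𝓝[≠] (0 : ℝ),
      ∫ x, ‖(∫ y, (|t| ^ (-(d : ℤ))) • η (t⁻¹ • y) * f (x - y)) - f x‖ ≤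
        ∫ y, ‖η y‖ * translationModulus volume f (t • y) := by
    filter_upwards [self_mem_nhdsWithin] with t ht
    simpa only [finrank_fin_fun] using
      integral_norm_convolution_rescale_sub_le hη_int hη_one hf ht
  exact squeeze_zero' (.of_forall fun _ ↦ integral_nonneg fun _ ↦ norm_nonneg _) h_bound
    ((tendsto_integral_mul_translationModulus_smul hη_int.norm hf).mono_left nhdsWithin_le_nhds)

/-- Scaled compactly supported kernels of unit mass form an approximate identity:
for integrable `η` with compact support and `∫ η = 1`, the convolutions
`η_t ⋆ f` converge to `f` in `L¹` as `t → 0`, where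
`η_t x = |t|^(-d) • η (t⁻¹ • x)`. -/
theorem stmt_6 (d : ℕ) (η : (Fin d → ℝ) → ℂ)
    (hη_int : Integrable η) (hη_supp : HasCompactSupport η)
    (hη_one : (∫ x, η x) = 1) :
    ∀ f : (Fin d → ℝ) → ℂ, Integrable f →
      Tendsto (fun t : ℝ =>
          ∫ x, ‖(∫ y, (|t| ^ (-(d : ℤ))) • η (t⁻¹ • y) * f (x - y)) - f x‖)
        (𝓝[≠] (0 : ℝ)) (𝓝 0) :=
  stmt_6_general d η hη_int hη_one
end

section
/- Let ρ be a complex-valued Schwartz function on ℝ and let μ be a Borel probability measure on ℝ with compact support (there is a compact K with μ(Kᶜ) = 0). For n ∈ ℕ and t ∈ ℝ define G_n(t) : ℝ → ℂ by G_n(t)(x) := ∫ (-a)^n • (iteratedDeriv n ρ)(x - t*a) ∂μ(a). Then: (i) G_n(t) is integrable on ℝ for every n and t; (ii) for every n and every t₀ ∈ ℝ, the curve t ↦ [G_n(t)] into L¹(ℝ, ℂ) is differentiable at t₀ (HasDerivAt in the Banach space Lp ℂ 1 volume) with derivative [G_{n+1}(t₀)]; (iii) G_n(0)(x) = (∫ a^n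 ∂μ(a)) • (-1)^n • (iteratedDeriv n ρ)(x) for all x. Consequently the map t ↦ [G_0(t)] is infinitely strongly differentiable in L¹ and its n-th derivative at t = 0 equals the n-th moment of μ times (-1)^n times the n-th derivative of ρ. -/
/-!
With `f = iteratedDeriv n ρ`, again a Schwartz function, `G_n(t)` is an average over `a ∼ μ` of
the translates `(-a)^n f(· - t a)`. By Tonelli and translation invariance,
`‖G_n(t)‖₁ ≤ ∫ |a|^n dμ · ‖f‖₁`. Taylor's formula with integral remainder gives
`‖f(· - t a) - f(· - t₀ a) + (t - t₀) a f'(· - t₀ a)‖₁ ≤ ((t - t₀) a)² ‖f''‖₁`, and integrating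
this against `|a|^n dμ`, which is supported in a bounded set, bounds the `L¹` norm of
`G_n(t) - G_n(t₀) - (t - t₀) G_{n+1}(t₀)` by `C (t - t₀)²`.
-/

open MeasureTheory

/-- `Gfun ρ μ n t x = ∫ (-a)^n • (iteratedDeriv n ρ) (x - t*a) ∂μ(a)`, the density
of `((-D)^n ν_in) ∗ (x^n ⊙ μ)_t` for a Schwartz input density `ρ`. -/
noncomputable def Gfun (ρ : SchwartzMap ℝ ℂ) (μ : Measure ℝ) (n : ℕ) (t : ℝ) : ℝ → ℂ :=
  fun x => ∫ a, ((-a) ^ n : ℝ) • iteratedDeriv n (ρ : ℝ → ℂ) (x - t * a) ∂μ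

open Set Function Filter Asymptotics Topology
open scoped ENNReal SchwartzMap Interval

variable {F : Type*} [NormedAddCommGroup F] [NormedSpace ℝ F]

theorem SchwartzMap.coe_iterate_derivCLM (f : 𝓢(ℝ, F)) (n : ℕ) :
    ⇑((derivCLM ℝ F)^[n] f) = iteratedDeriv n f := by
  induction n with
  | zero => rfl
  | succ n ih =>
    ext x
    rw [iterate_succ_apply', derivCLM_apply, ih, iteratedDeriv_succ]

section Taylor

variable [CompleteSpace F] {f f' f'' : ℝ → F}

theorem sub_sub_smul_eq_intervalIntegral (hf : ∀ x, HasDerivAt f (f' x) x)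
    (hf' : ∀ x, HasDerivAt f' (f'' x) x) (hf'' : Continuous f'') (x h : ℝ) :
    f (x + h) - f x - h • f' x = ∫ s in (0 : ℝ)..h, (h - s) • f'' (x + s) := by
  have hderiv : ∀ s ∈ uIcc 0 h, HasDerivAt (fun s => f (x + s) + (h - s) • f' (x + s))
      ((h - s) • f'' (x + s)) s := by
    intro s _
    have hfs := (hf (x + s)).comp_const_add x s
    have hf's := (hf' (x + s)).comp_const_add x s
    refine (hfs.add (((hasDerivAt_id s).const_sub h).smul hf's)).congr_deriv ?_
    simp only [id, neg_one_smul]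
    abel
  rw [intervalIntegral.integral_eq_sub_of_hasDerivAt hderiv
    (Continuous.intervalIntegrable (by fun_prop) _ _)]
  simp only [add_zero, sub_self, zero_smul, sub_zero]
  abel

theorem lintegral_enorm_sub_sub_smul_le (hf : ∀ x, HasDerivAt f (f' x) x)
    (hf' : ∀ x, HasDerivAt f' (f'' x) x) (hf'' : Continuous f'') (h : ℝ) :
    ∫⁻ x, ‖f (x + h) - f x - h • f' x‖ₑ ≤ ‖h‖ₑ ^ 2 * ∫⁻ x, ‖f'' x‖ₑ := by
  have hm := hf''.stronglyMeasurable
  have hpoint : ∀ x, ‖f (x + h) - f x - h • f' x‖ₑ ≤ ∫⁻ s in Ι 0 h, ‖h‖ₑ * ‖f'' (x + s)‖ₑ := by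
    intro x
    rw [sub_sub_smul_eq_intervalIntegral hf hf' hf'', ← ofReal_norm,
      intervalIntegral.norm_integral_eq_norm_integral_uIoc, ofReal_norm]
    refine (enorm_integral_le_lintegral_enorm _).trans (setLIntegral_mono (by fun_prop) ?_)
    intro s hs
    rw [enorm_smul]
    gcongr
    simpa [Real.enorm_eq_ofReal_abs] using abs_sub_right_of_mem_uIcc (uIoc_subset_uIcc hs)
  calc ∫⁻ x, ‖f (x + h) - f x - h • f' x‖ₑ
      ≤ ∫⁻ x, ∫⁻ s in Ι 0 h, ‖h‖ₑ * ‖f'' (x + s)‖ₑ := lintegral_mono hpoint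
    _ = ∫⁻ s in Ι 0 h, ‖h‖ₑ * ∫⁻ x, ‖f'' (x + s)‖ₑ := by
        rw [lintegral_lintegral_swap (by fun_prop : Measurable _).aemeasurable]
        simp_rw [lintegral_const_mul' _ _ enorm_ne_top]
    _ = ‖h‖ₑ ^ 2 * ∫⁻ x, ‖f'' x‖ₑ := by
        simp_rw [lintegral_add_right_eq_self (fun x => ‖f'' x‖ₑ)]
        rw [setLIntegral_const, Real.volume_uIoc, sub_zero, ← Real.enorm_eq_ofReal_abs]
        ring

end Taylor

theorem lintegral_enorm_integral_le {α β G : Type*} [MeasurableSpace α] [MeasurableSpace β]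
    [NormedAddCommGroup G] [NormedSpace ℝ G] {μ : Measure α} {ν : Measure β} [SFinite μ]
    [SFinite ν] {K : α → β → G} (hK : AEStronglyMeasurable (uncurry K) (μ.prod ν)) :
    ∫⁻ y, ‖∫ x, K x y ∂μ‖ₑ ∂ν ≤ ∫⁻ x, ∫⁻ y, ‖K x y‖ₑ ∂ν ∂μ :=
  (lintegral_mono fun _ => enorm_integral_le_lintegral_enorm _).trans_eq
    (lintegral_lintegral_swap hK.enorm).symm

theorem lintegral_enorm_smul_comp_sub {E : Type*} [NormedAddCommGroup E] [NormedSpace ℝ E]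
    (r c : ℝ) (g : ℝ → E) : ∫⁻ x, ‖r • g (x - c)‖ₑ = ‖r‖ₑ * ∫⁻ x, ‖g x‖ₑ := by
  simp_rw [enorm_smul]
  rw [lintegral_const_mul' _ _ enorm_ne_top, lintegral_sub_right_eq_self (‖g ·‖ₑ)]

theorem exists_ae_norm_le_of_isCompact {E : Type*} [SeminormedAddCommGroup E] [MeasurableSpace E]
    {μ : Measure E} {K : Set E} (hK : IsCompact K) (hμK : μ Kᶜ = 0) :
    ∃ R, ∀ᵐ a ∂μ, ‖a‖ ≤ R :=
  let ⟨R, hR⟩ := hK.isBounded.exists_norm_le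
  ⟨R, Filter.mem_of_superset (mem_ae_iff.mpr hμK) hR⟩

theorem hasDerivAt_of_enorm_sub_sub_smul_le_sq {E : Type*} [NormedAddCommGroup E]
    [NormedSpace ℝ E] {f : ℝ → E} {f' : E} {t₀ : ℝ} {C : ℝ≥0∞} (hC : C ≠ ∞)
    (h : ∀ᶠ t in 𝓝 t₀, ‖f t - f t₀ - (t - t₀) • f'‖ₑ ≤ C * ‖t - t₀‖ₑ ^ 2) :
    HasDerivAt f f' t₀ := by
  rw [hasDerivAt_iff_isLittleO]
  refine (IsBigO.of_bound C.toReal (h.mono fun t ht => ?_)).trans_isLittleO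
    (isLittleO_pow_sub_sub t₀ one_lt_two)
  have := ENNReal.toReal_mono (by finiteness) ht
  simpa [ENNReal.toReal_mul] using this

theorem lintegral_enorm_pow_mul_le {μ : Measure ℝ} {R : ℝ} (hR : ∀ᵐ a ∂μ, ‖a‖ ≤ R) (m : ℕ)
    (c : ℝ≥0∞) :
    ∫⁻ a, ‖a‖ₑ ^ m * c ∂μ ≤ ENNReal.ofReal R ^ m * c * μ univ := by
  rw [← lintegral_const]
  refine lintegral_mono_ae (hR.mono fun a ha => ?_)
  rw [← ofReal_norm]
  gcongr

section MomentConvolution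

open SchwartzMap

variable (μ : Measure ℝ) in
noncomputable def momentConvolution (f : ℝ → F) (n : ℕ) (t x : ℝ) : F :=
  ∫ a, ((-a) ^ n : ℝ) • f (x - t * a) ∂μ

variable {μ : Measure ℝ} [IsFiniteMeasure μ] {R : ℝ} (hR : ∀ᵐ a ∂μ, ‖a‖ ≤ R)
include hR

theorem integrable_neg_pow_smul_comp_sub_mul (f : 𝓢(ℝ, F)) (n : ℕ) (t x : ℝ) :
    Integrable (fun a => ((-a) ^ n : ℝ) • f (x - t * a)) μ := by
  refine Integrable.of_bound (by fun_prop) (R ^ n * SchwartzMap.seminorm ℝ 0 0 f)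
    (hR.mono fun a ha => ?_)
  rw [norm_smul, norm_pow, norm_neg]
  have hR0 : 0 ≤ R := (norm_nonneg a).trans ha
  gcongr
  exact f.norm_le_seminorm ℝ _

theorem integrable_momentConvolution (f : 𝓢(ℝ, F)) (n : ℕ) (t : ℝ) :
    Integrable (momentConvolution μ f n t) := by
  have hK : Continuous (uncurry fun a x => ((-a) ^ n : ℝ) • f (x - t * a)) := by fun_prop
  refine ⟨(hK.stronglyMeasurable.integral_prod_left' (μ := μ)).aestronglyMeasurable, ?_⟩
  calc ∫⁻ x, ‖momentConvolution μ f n t x‖ₑ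
      ≤ ∫⁻ a, (∫⁻ x, ‖((-a) ^ n : ℝ) • f (x - t * a)‖ₑ) ∂μ :=
        lintegral_enorm_integral_le hK.aestronglyMeasurable
    _ = ∫⁻ a, ‖a‖ₑ ^ n * (∫⁻ x, ‖f x‖ₑ) ∂μ := by
        simp_rw [lintegral_enorm_smul_comp_sub, enorm_pow, enorm_neg]
    _ ≤ ENNReal.ofReal R ^ n * (∫⁻ x, ‖f x‖ₑ) * μ univ := lintegral_enorm_pow_mul_le hR n _
    _ < ∞ := by
        have := (f.integrable (μ := volume)).hasFiniteIntegral
        finiteness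

-- The integrand is the first-order Taylor remainder of `f` at `x - t₀ * a` with increment
-- `-((t - t₀) * a)`.
theorem momentConvolution_sub_sub_smul_apply (f : 𝓢(ℝ, F)) (n : ℕ) (t t₀ x : ℝ) :
    momentConvolution μ f n t x - momentConvolution μ f n t₀ x
        - (t - t₀) • momentConvolution μ (derivCLM ℝ F f) (n + 1) t₀ x
      = ∫ a, ((-a) ^ n : ℝ) • (f (x - t₀ * a + -((t - t₀) * a)) - f (x - t₀ * a)
          - (-((t - t₀) * a)) • derivCLM ℝ F f (x - t₀ * a)) ∂μ := by
  have hf := integrable_neg_pow_smul_comp_sub_mul hR f n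
  have hf' := integrable_neg_pow_smul_comp_sub_mul hR (derivCLM ℝ F f) (n + 1) t₀ x
  have hexpand : (fun a => ((-a) ^ n : ℝ) • (f (x - t₀ * a + -((t - t₀) * a)) - f (x - t₀ * a)
          - (-((t - t₀) * a)) • derivCLM ℝ F f (x - t₀ * a)))
      = fun a => ((-a) ^ n : ℝ) • f (x - t * a) - ((-a) ^ n : ℝ) • f (x - t₀ * a)
          - (t - t₀) • (((-a) ^ (n + 1) : ℝ) • derivCLM ℝ F f (x - t₀ * a)) := by
    ext a
    rw [show x - t₀ * a + -((t - t₀) * a) = x - t * a by ring]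
    simp only [smul_sub, smul_smul, pow_succ]
    module
  rw [hexpand, integral_sub ?_ ?_, integral_sub (hf t x) (hf t₀ x), integral_smul]
  · rfl
  · exact (hf t x).sub (hf t₀ x)
  · exact hf'.smul (t - t₀)

theorem lintegral_enorm_momentConvolution_sub_sub_smul_le [CompleteSpace F] (f : 𝓢(ℝ, F))
    (n : ℕ) (t t₀ : ℝ) :
    ∫⁻ x, ‖momentConvolution μ f n t x - momentConvolution μ f n t₀ x
        - (t - t₀) • momentConvolution μ (derivCLM ℝ F f) (n + 1) t₀ x‖ₑ
      ≤ ENNReal.ofReal R ^ (n + 2) * (∫⁻ x, ‖derivCLM ℝ F (derivCLM ℝ F f) x‖ₑ) * μ univ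
        * ‖t - t₀‖ₑ ^ 2 := by
  simp_rw [momentConvolution_sub_sub_smul_apply hR]
  set f' := derivCLM ℝ F f
  set f'' := derivCLM ℝ F f'
  set C := ∫⁻ x, ‖f'' x‖ₑ
  let T : ℝ → ℝ → F := fun h y => f (y + h) - f y - h • f' y
  have hT : ∀ h, ∫⁻ y, ‖T h y‖ₑ ≤ ‖h‖ₑ ^ 2 * C :=
    lintegral_enorm_sub_sub_smul_le f.hasDerivAt f'.hasDerivAt f''.continuous
  have hK : Continuous
      (uncurry fun a x => ((-a) ^ n : ℝ) • T (-((t - t₀) * a)) (x - t₀ * a)) := by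
    simp only [T]
    fun_prop
  calc ∫⁻ x, ‖∫ a, ((-a) ^ n : ℝ) • T (-((t - t₀) * a)) (x - t₀ * a) ∂μ‖ₑ
    _ ≤ ∫⁻ a, (∫⁻ x, ‖((-a) ^ n : ℝ) • T (-((t - t₀) * a)) (x - t₀ * a)‖ₑ) ∂μ :=
        lintegral_enorm_integral_le hK.aestronglyMeasurable
    _ = ∫⁻ a, ‖a‖ₑ ^ n * (∫⁻ y, ‖T (-((t - t₀) * a)) y‖ₑ) ∂μ := by
        refine lintegral_congr fun a => ?_
        rw [lintegral_enorm_smul_comp_sub, enorm_pow, enorm_neg]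
    _ ≤ ∫⁻ a, ‖a‖ₑ ^ n * (‖(t - t₀) * a‖ₑ ^ 2 * C) ∂μ := by
        gcongr with a
        simpa only [enorm_neg] using hT (-((t - t₀) * a))
    _ = ∫⁻ a, ‖a‖ₑ ^ (n + 2) * (‖t - t₀‖ₑ ^ 2 * C) ∂μ := by
        simp only [enorm_mul, mul_pow]
        exact lintegral_congr fun a => by ring
    _ ≤ ENNReal.ofReal R ^ (n + 2) * (‖t - t₀‖ₑ ^ 2 * C) * μ univ :=
        lintegral_enorm_pow_mul_le hR _ _
    _ = ENNReal.ofReal R ^ (n + 2) * C * μ univ * ‖t - t₀‖ₑ ^ 2 := by ring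

theorem hasDerivAt_toL1_momentConvolution [CompleteSpace F] (f : 𝓢(ℝ, F)) (n : ℕ) (t₀ : ℝ) :
    HasDerivAt (fun t => (integrable_momentConvolution hR f n t).toL1)
      ((integrable_momentConvolution hR (derivCLM ℝ F f) (n + 1) t₀).toL1) t₀ := by
  refine hasDerivAt_of_enorm_sub_sub_smul_le_sq (C := ENNReal.ofReal R ^ (n + 2)
    * (∫⁻ x, ‖derivCLM ℝ F (derivCLM ℝ F f) x‖ₑ) * μ univ) ?_ (Eventually.of_forall fun t => ?_)
  · have := ((derivCLM ℝ F (derivCLM ℝ F f)).integrable (μ := volume)).hasFiniteIntegral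
    finiteness
  · rw [← Integrable.toL1_sub, ← Integrable.toL1_smul, ← Integrable.toL1_sub,
      Integrable.enorm_toL1]
    exact lintegral_enorm_momentConvolution_sub_sub_smul_le hR f n t t₀

end MomentConvolution

theorem Gfun_eq_momentConvolution (ρ : 𝓢(ℝ, ℂ)) (μ : Measure ℝ) (n : ℕ) :
    Gfun ρ μ n = momentConvolution μ ((SchwartzMap.derivCLM ℝ ℂ)^[n] ρ) n := by
  rw [SchwartzMap.coe_iterate_derivCLM]
  rfl

theorem Gfun_zero_apply (ρ : 𝓢(ℝ, ℂ)) (μ : Measure ℝ) (n : ℕ) (x : ℝ) :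
    Gfun ρ μ n 0 x = (∫ a, a ^ n ∂μ) • ((-1 : ℂ) ^ n • iteratedDeriv n (ρ : ℝ → ℂ) x) := by
  have hmoment : ∫ a, (-a) ^ n ∂μ = (-1) ^ n * ∫ a, a ^ n ∂μ := by
    rw [← integral_const_mul]
    congr 1 with a
    ring
  simp only [Gfun, zero_mul, sub_zero]
  rw [integral_smul_const, hmoment, mul_smul, smul_comm, Complex.real_smul (x := (-1) ^ n)]
  push_cast
  rfl

/-- For a Schwartz density `ρ` and a compactly supported probability measure `μ`:
each `Gfun ρ μ n t` is integrable, the curve `t ↦ [Gfun ρ μ n t]` in `L¹` is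
strongly differentiable with derivative `[Gfun ρ μ (n+1) t₀]`, and at `t = 0` it
is the `n`-th moment of `μ` times `(-1)^n` times the `n`-th derivative of `ρ`. -/
theorem stmt_8 (ρ : SchwartzMap ℝ ℂ) (μ : Measure ℝ) [IsProbabilityMeasure μ]
    (hμ : ∃ K : Set ℝ, IsCompact K ∧ μ Kᶜ = 0) :
    ∃ hint : ∀ (n : ℕ) (t : ℝ), Integrable (Gfun ρ μ n t) volume,
      (∀ (n : ℕ) (t₀ : ℝ),
        HasDerivAt (fun t : ℝ => Integrable.toL1 (Gfun ρ μ n t) (hint n t))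
          (Integrable.toL1 (Gfun ρ μ (n + 1) t₀) (hint (n + 1) t₀)) t₀) ∧
      (∀ (n : ℕ) (x : ℝ),
        Gfun ρ μ n 0 x
          = (∫ a, a ^ n ∂μ) • ((-1 : ℂ) ^ n • iteratedDeriv n (ρ : ℝ → ℂ) x)) := by
  obtain ⟨K, hK, hμK⟩ := hμ
  obtain ⟨R, hR⟩ := exists_ae_norm_le_of_isCompact hK hμK
  have hint : ∀ n t, Integrable (Gfun ρ μ n t) := fun n t => by
    rw [Gfun_eq_momentConvolution]
    exact integrable_momentConvolution hR _ n t
  refine ⟨hint, fun n t₀ => ?_, Gfun_zero_apply ρ μ⟩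
  simp only [Gfun_eq_momentConvolution, iterate_succ_apply']
  exact hasDerivAt_toL1_momentConvolution hR _ n t₀
end

section
/- Let υ be a complex-valued Schwartz function on ℝ × ℝ and let μ be a finite Borel measure on ℝ × ℝ with compact support (there is a compact K with μ(Kᶜ) = 0). For t ∈ ℝ define F(t) : ℝ × ℝ → ℂ by F(t)(x) := ∫ υ(x - t • a) ∂μ(a), and H(t)(x) := - ∫ (fderiv ℝ υ (x - t • a)) a ∂μ(a). Then F(t) and H(t) are integrable for every t, and the curve t ↦ [F(t)] into L¹(ℝ × ℝ, ℂ) is differentiable at every t₀ ∈ ℝ (HasDerivAt in Lp ℂ 1 volume) with derivative [H(t₀)]. -/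
open MeasureTheory

/-- `Ffun υ μ t x = ∫ υ (x - t • a) ∂μ(a)`. -/
noncomputable def Ffun (υ : SchwartzMap (ℝ × ℝ) ℂ) (μ : Measure (ℝ × ℝ)) (t : ℝ) :
    ℝ × ℝ → ℂ :=
  fun x => ∫ a, υ (x - t • a) ∂μ

/-- `Hfun υ μ t x = - ∫ (fderiv ℝ υ (x - t • a)) a ∂μ(a)`. -/
noncomputable def Hfun (υ : SchwartzMap (ℝ × ℝ) ℂ) (μ : Measure (ℝ × ℝ)) (t : ℝ) :
    ℝ × ℝ → ℂ :=
  fun x => - ∫ a, fderiv ℝ (υ : ℝ × ℝ → ℂ) (x - t • a) a ∂μ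

open Filter Topology Metric Asymptotics SchwartzMap

/-!
The first-order remainder `F(t + h) - F(t) - h • H(t)` is the `μ`-average of the translates by
`t • a` of the Taylor remainders `υ (· - h • a) - υ + Dυ (h • a)`. Because `D²υ` is dominated by
an integrable weight that changes by at most a constant factor under translations of length
`≤ 1`, each Taylor remainder has `L¹` norm `O(‖h • a‖²)`. Translation preserves the `L¹` norm and
`a` is bounded on the support of `μ`, so the remainder is `O(h²)`, hence `o(h)`, in `L¹`.
-/

section Taylor

variable {E F : Type*} [NormedAddCommGroup E] [NormedSpace ℝ E]
  [NormedAddCommGroup F] [NormedSpace ℝ F]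

theorem norm_sub_sub_add_fderiv_le {f : E → F} (hf : ContDiff ℝ 2 f) {y w : E} {M : ℝ}
    (hM : ∀ z ∈ closedBall y ‖w‖, ‖fderiv ℝ (fderiv ℝ f) z‖ ≤ M) :
    ‖f (y - w) - f y + fderiv ℝ f y w‖ ≤ M * ‖w‖ ^ 2 := by
  have hf' : Differentiable ℝ (fderiv ℝ f) :=
    (hf.fderiv_right (m := 1) (by norm_num)).differentiable one_ne_zero
  have hy : y ∈ closedBall y ‖w‖ := mem_closedBall_self (norm_nonneg w)
  have hyw : y - w ∈ closedBall y ‖w‖ := by simp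
  have hM0 : 0 ≤ M := (norm_nonneg (fderiv ℝ (fderiv ℝ f) y)).trans (hM y hy)
  have hDf : ∀ z ∈ closedBall y ‖w‖, ‖fderiv ℝ f z - fderiv ℝ f y‖ ≤ M * ‖w‖ := fun z hz =>
    calc ‖fderiv ℝ f z - fderiv ℝ f y‖ ≤ M * ‖z - y‖ :=
          (convex_closedBall y ‖w‖).norm_image_sub_le_of_norm_fderiv_le
            (fun z _ => hf'.differentiableAt) hM hy hz
      _ ≤ M * ‖w‖ := by gcongr; rwa [← dist_eq_norm]
  have := (convex_closedBall y ‖w‖).norm_image_sub_le_of_norm_fderiv_le'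
    (fun z _ => (hf.differentiable two_ne_zero).differentiableAt) hDf hy hyw
  simpa [sub_eq_add_neg, pow_two, mul_assoc] using this

end Taylor

theorem one_add_norm_rpow_neg_le {E : Type*} [SeminormedAddCommGroup E] {y z : E}
    (hyz : ‖z - y‖ ≤ 1) {r : ℝ} (hr : 0 ≤ r) :
    (1 + ‖z‖) ^ (-r) ≤ 2 ^ r * (1 + ‖y‖) ^ (-r) := by
  have hy : 1 + ‖y‖ ≤ 2 * (1 + ‖z‖) := by
    linarith [norm_le_norm_add_norm_sub' y z, norm_sub_rev z y, norm_nonneg z]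
  calc (1 + ‖z‖) ^ (-r) = 2 ^ r * (2 * (1 + ‖z‖)) ^ (-r) := by
        rw [Real.mul_rpow zero_le_two (by positivity), ← mul_assoc, Real.rpow_neg zero_le_two,
          mul_inv_cancel₀ (by positivity), one_mul]
    _ ≤ 2 ^ r * (1 + ‖y‖) ^ (-r) := mul_le_mul_of_nonneg_left
        (Real.rpow_le_rpow_of_nonpos (by positivity) hy (neg_nonpos.2 hr)) (by positivity)

theorem Continuous.integrable_of_ae_norm_le {E F : Type*} [NormedAddCommGroup E] [ProperSpace E]
    [MeasurableSpace E] [OpensMeasurableSpace E] {μ : Measure E} [IsFiniteMeasure μ]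
    [NormedAddCommGroup F] {f : E → F} (hf : Continuous f) {R : ℝ}
    (hR : ∀ᵐ a ∂μ, ‖a‖ ≤ R) : Integrable f μ := by
  obtain ⟨C, hC⟩ := (isCompact_closedBall (0 : E) R).exists_bound_of_continuousOn hf.continuousOn
  exact .of_bound hf.aestronglyMeasurable C
    (hR.mono fun a ha => hC a (mem_closedBall_zero_iff.2 ha))

namespace SchwartzMap

variable {E F : Type*} [NormedAddCommGroup E] [NormedSpace ℝ E]
  [NormedAddCommGroup F] [NormedSpace ℝ F]

@[fun_prop]
theorem continuous_fderiv (f : 𝓢(E, F)) : Continuous (fderiv ℝ f) :=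
  (fderivCLM ℝ E F f).continuous

theorem exists_norm_le_mul_one_add_norm_rpow_neg (f : 𝓢(E, F)) (n : ℕ) :
    ∃ C, 0 ≤ C ∧ ∀ x, ‖f x‖ ≤ C * (1 + ‖x‖) ^ (-(n : ℝ)) := by
  refine ⟨2 ^ n * (Finset.Iic (n, 0)).sup (fun m => SchwartzMap.seminorm ℝ m.1 m.2) f,
    by positivity, fun x => ?_⟩
  rw [Real.rpow_neg (by positivity), ← div_eq_mul_inv, le_div_iff₀ (by positivity),
    Real.rpow_natCast, mul_comm]
  simpa using one_add_le_sup_seminorm_apply (m := (n, 0)) (k := n) (n := 0) le_rfl le_rfl f x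

variable [MeasurableSpace E] {ν : Measure E} [ν.HasTemperateGrowth]

theorem exists_integral_norm_sub_sub_add_fderiv_le (f : 𝓢(E, F)) :
    ∃ C, 0 ≤ C ∧ ∀ w : E, ‖w‖ ≤ 1 →
      ∫ y, ‖f (y - w) - f y + fderiv ℝ f y w‖ ∂ν ≤ C * ‖w‖ ^ 2 := by
  set n := ν.integrablePower
  obtain ⟨C, hC0, hC⟩ :=
    (fderivCLM ℝ E _ (fderivCLM ℝ E F f)).exists_norm_le_mul_one_add_norm_rpow_neg n
  refine ⟨C * 2 ^ (n : ℝ) * ∫ y, (1 + ‖y‖) ^ (-(n : ℝ)) ∂ν,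
    mul_nonneg (by positivity) (integral_nonneg fun _ => by positivity), fun w hw => ?_⟩
  have hpt : ∀ y, ‖f (y - w) - f y + fderiv ℝ f y w‖ ≤
      C * 2 ^ (n : ℝ) * (1 + ‖y‖) ^ (-(n : ℝ)) * ‖w‖ ^ 2 := fun y =>
    norm_sub_sub_add_fderiv_le (f.smooth 2) fun z hz => by
      calc ‖fderiv ℝ (fderiv ℝ f) z‖ ≤ C * (1 + ‖z‖) ^ (-(n : ℝ)) := hC z
        _ ≤ C * (2 ^ (n : ℝ) * (1 + ‖y‖) ^ (-(n : ℝ))) := by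
            gcongr
            exact one_add_norm_rpow_neg_le ((mem_closedBall_iff_norm.1 hz).trans hw) n.cast_nonneg
        _ = _ := by ring
  calc ∫ y, ‖f (y - w) - f y + fderiv ℝ f y w‖ ∂ν
      ≤ ∫ y, C * 2 ^ (n : ℝ) * (1 + ‖y‖) ^ (-(n : ℝ)) * ‖w‖ ^ 2 ∂ν :=
        integral_mono_of_nonneg (.of_forall fun _ => norm_nonneg _)
          (((ν.integrable_pow_neg_integrablePower).const_mul _).mul_const _) (.of_forall hpt)
    _ = _ := by rw [integral_mul_const, integral_const_mul]

variable [BorelSpace E] [SecondCountableTopology E]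

theorem integrable_fderiv_apply (f : 𝓢(E, F)) (w : E) :
    Integrable (fun y => fderiv ℝ f y w) ν := by
  simpa using (ContinuousLinearMap.apply ℝ F w).integrable_comp
    ((fderivCLM ℝ E F f).integrable (μ := ν))

theorem integrable_sub_sub_add_fderiv (f : 𝓢(E, F)) (w : E) :
    Integrable (fun y => f (y - w) - f y + fderiv ℝ f y w) ν :=
  (((compSubConstCLM ℝ w f).integrable).sub f.integrable).add (f.integrable_fderiv_apply w)

end SchwartzMap

section IntegralTranslates

variable {E A F : Type*} [NormedAddCommGroup E] [MeasurableSpace E] [BorelSpace E]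
  [SecondCountableTopology E] {ν : Measure E} [SFinite ν] [ν.IsAddRightInvariant]
  [TopologicalSpace A] [MeasurableSpace A] [BorelSpace A] [SecondCountableTopology A]
  {μ : Measure A} [IsFiniteMeasure μ]
  [NormedAddCommGroup F] {k : A → E → F} {s : A → E} {M : ℝ}

theorem integrable_prod_comp_sub (hk : Continuous (Function.uncurry k)) (hs : Continuous s)
    (hint : ∀ᵐ a ∂μ, Integrable (k a) ν) (hM : ∀ᵐ a ∂μ, ∫ y, ‖k a y‖ ∂ν ≤ M) :
    Integrable (fun p : E × A => k p.2 (p.1 - s p.2)) (ν.prod μ) := by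
  have hc : Continuous fun p : E × A => k p.2 (p.1 - s p.2) :=
    hk.comp (continuous_snd.prodMk (continuous_fst.sub (hs.comp continuous_snd)))
  refine (integrable_prod_iff' hc.aestronglyMeasurable).2 ⟨?_, ?_⟩
  · exact hint.mono fun a ha => ha.comp_sub_right (s a)
  · refine .of_bound hc.norm.stronglyMeasurable.integral_prod_left'.aestronglyMeasurable M ?_
    filter_upwards [hM] with a ha
    rw [integral_sub_right_eq_self (fun y => ‖k a y‖) (s a), Real.norm_of_nonneg
      (integral_nonneg fun _ => norm_nonneg _)]
    exact ha

variable [NormedSpace ℝ F]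

theorem integrable_integral_comp_sub (hk : Continuous (Function.uncurry k)) (hs : Continuous s)
    (hint : ∀ᵐ a ∂μ, Integrable (k a) ν) (hM : ∀ᵐ a ∂μ, ∫ y, ‖k a y‖ ∂ν ≤ M) :
    Integrable (fun x => ∫ a, k a (x - s a) ∂μ) ν :=
  (integrable_prod_comp_sub hk hs hint hM).integral_prod_left

theorem integral_norm_integral_comp_sub_le (hk : Continuous (Function.uncurry k))
    (hs : Continuous s) (hint : ∀ᵐ a ∂μ, Integrable (k a) ν)
    (hM : ∀ᵐ a ∂μ, ∫ y, ‖k a y‖ ∂ν ≤ M) :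
    ∫ x, ‖∫ a, k a (x - s a) ∂μ‖ ∂ν ≤ μ.real Set.univ * M := by
  have hK := (integrable_prod_comp_sub hk hs hint hM).norm
  calc ∫ x, ‖∫ a, k a (x - s a) ∂μ‖ ∂ν ≤ ∫ x, ∫ a, ‖k a (x - s a)‖ ∂μ ∂ν :=
        integral_mono_of_nonneg (.of_forall fun _ => norm_nonneg _) hK.integral_prod_left
          (.of_forall fun _ => norm_integral_le_integral_norm _)
    _ = ∫ a, ∫ x, ‖k a (x - s a)‖ ∂ν ∂μ := integral_integral_swap hK
    _ = ∫ a, ∫ y, ‖k a y‖ ∂ν ∂μ := by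
        congr 1 with a
        exact integral_sub_right_eq_self (fun y => ‖k a y‖) (s a)
    _ ≤ ∫ _a, M ∂μ := integral_mono_of_nonneg (.of_forall fun _ => integral_nonneg fun _ =>
        norm_nonneg _) (integrable_const M) hM
    _ = μ.real Set.univ * M := by rw [integral_const, smul_eq_mul]

end IntegralTranslates

section Ffun

variable (υ : 𝓢(ℝ × ℝ, ℂ)) (μ : Measure (ℝ × ℝ)) [IsFiniteMeasure μ]

theorem integrable_Ffun (t : ℝ) : Integrable (Ffun υ μ t) volume :=
  integrable_integral_comp_sub (k := fun _ => υ) (by fun_prop)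
    (continuous_const_smul t) (.of_forall fun _ => υ.integrable) (.of_forall fun _ => le_rfl)

variable {μ} {R : ℝ} (hR : ∀ᵐ a ∂μ, ‖a‖ ≤ R)
include hR

theorem integrable_Hfun (t : ℝ) : Integrable (Hfun υ μ t) volume := by
  have hM : ∀ᵐ a ∂μ, ∫ y, ‖fderiv ℝ υ y a‖ ≤ (∫ y, ‖fderiv ℝ υ y‖) * R := by
    filter_upwards [hR] with a ha
    calc ∫ y, ‖fderiv ℝ υ y a‖ ≤ ∫ y, ‖fderiv ℝ υ y‖ * R :=
          integral_mono_of_nonneg (.of_forall fun _ => norm_nonneg _)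
            ((fderivCLM ℝ _ ℂ υ).integrable.norm.mul_const R)
            (.of_forall fun y => (ContinuousLinearMap.le_opNorm _ a).trans
              (mul_le_mul_of_nonneg_left ha (norm_nonneg _)))
      _ = (∫ y, ‖fderiv ℝ υ y‖) * R := integral_mul_const R _
  exact (integrable_integral_comp_sub (k := fun a y => fderiv ℝ υ y a)
    (by fun_prop)
    (continuous_const_smul t) (.of_forall υ.integrable_fderiv_apply) hM).neg

theorem Ffun_add_sub_sub_smul_Hfun (t h : ℝ) (x : ℝ × ℝ) :
    Ffun υ μ (t + h) x - Ffun υ μ t x - h • Hfun υ μ t x =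
      ∫ a, (υ (x - t • a - h • a) - υ (x - t • a) + fderiv ℝ υ (x - t • a) (h • a)) ∂μ := by
  have hυ : ∀ s : ℝ, Integrable (fun a => υ (x - s • a)) μ := fun s =>
    Continuous.integrable_of_ae_norm_le (by fun_prop) hR
  have hD : Integrable (fun a => fderiv ℝ υ (x - t • a) (h • a)) μ :=
    Continuous.integrable_of_ae_norm_le (by fun_prop) hR
  have hυ' : Integrable (fun a => υ (x - t • a - h • a)) μ := by
    simpa only [add_smul, sub_sub] using hυ (t + h)
  rw [integral_add (f := fun a => υ (x - t • a - h • a) - υ (x - t • a)) (hυ'.sub (hυ t)) hD,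
    integral_sub hυ' (hυ t)]
  simp only [Ffun, Hfun, add_smul, ← sub_sub, map_smul, integral_smul, smul_neg, sub_neg_eq_add]

theorem isBigO_integral_norm_Ffun_add_sub_sub_smul_Hfun (t : ℝ) :
    (fun h : ℝ => ∫ x, ‖Ffun υ μ (t + h) x - Ffun υ μ t x - h • Hfun υ μ t x‖)
      =O[𝓝 0] fun h => h ^ 2 := by
  obtain ⟨C, hC0, hC⟩ := υ.exists_integral_norm_sub_sub_add_fderiv_le (ν := volume)
  have hsmall : ∀ᶠ h : ℝ in 𝓝 0, |h| * R ≤ 1 := by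
    refine (Tendsto.eventually_lt_const zero_lt_one ?_).mono fun _ => le_of_lt
    simpa using (continuous_abs.mul_const R).tendsto (0 : ℝ)
  refine IsBigO.of_bound (μ.real Set.univ * (C * R ^ 2)) ?_
  filter_upwards [hsmall] with h hh
  have hM : ∀ᵐ a ∂μ, ∫ y, ‖υ (y - h • a) - υ y + fderiv ℝ υ y (h • a)‖ ≤ C * R ^ 2 * h ^ 2 := by
    filter_upwards [hR] with a ha
    have hha : ‖h • a‖ ≤ |h| * R := by rw [norm_smul, Real.norm_eq_abs]; gcongr
    calc _ ≤ C * ‖h • a‖ ^ 2 := hC _ (hha.trans hh)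
      _ ≤ C * (|h| * R) ^ 2 := by gcongr
      _ = C * R ^ 2 * h ^ 2 := by rw [mul_pow, sq_abs]; ring
  simp_rw [Ffun_add_sub_sub_smul_Hfun υ hR]
  rw [Real.norm_of_nonneg (integral_nonneg fun _ => norm_nonneg _), norm_pow, Real.norm_eq_abs,
    sq_abs, mul_assoc]
  exact integral_norm_integral_comp_sub_le
    (k := fun a y => υ (y - h • a) - υ y + fderiv ℝ υ y (h • a))
    (by fun_prop)
    (continuous_const_smul t) (.of_forall fun a => υ.integrable_sub_sub_add_fderiv (h • a)) hM

end Ffun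

/-- For a Schwartz function `υ` on `ℝ × ℝ` and a compactly supported finite measure `μ`,
the functions `Ffun υ μ t` and `Hfun υ μ t` are integrable, and the curve
`t ↦ [Ffun υ μ t]` in `L¹` is strongly differentiable with derivative `[Hfun υ μ t₀]`. -/
theorem stmt_9 (υ : SchwartzMap (ℝ × ℝ) ℂ) (μ : Measure (ℝ × ℝ)) [IsFiniteMeasure μ]
    (hμ : ∃ K : Set (ℝ × ℝ), IsCompact K ∧ μ Kᶜ = 0) :
    ∃ (hF : ∀ t : ℝ, Integrable (Ffun υ μ t) volume)
      (hH : ∀ t : ℝ, Integrable (Hfun υ μ t) volume),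
      ∀ t₀ : ℝ, HasDerivAt (fun t : ℝ => Integrable.toL1 (Ffun υ μ t) (hF t))
        (Integrable.toL1 (Hfun υ μ t₀) (hH t₀)) t₀ := by
  obtain ⟨K, hK, hKμ⟩ := hμ
  obtain ⟨R, hKR⟩ := hK.isBounded.exists_norm_le
  have hR : ∀ᵐ a ∂μ, ‖a‖ ≤ R :=
    (measure_eq_zero_iff_ae_notMem.1 hKμ).mono fun a ha => hKR a (Set.notMem_compl_iff.1 ha)
  refine ⟨integrable_Ffun υ μ, integrable_Hfun υ hR, fun t₀ => ?_⟩
  rw [hasDerivAt_iff_isLittleO_nhds_zero]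
  refine IsBigO.trans_isLittleO ?_ (isLittleO_pow_id one_lt_two)
  refine isBigO_norm_left.1 ((isBigO_integral_norm_Ffun_add_sub_sub_smul_Hfun υ hR t₀).congr_left
    fun h => ?_)
  rw [← Integrable.toL1_smul', ← Integrable.toL1_sub, ← Integrable.toL1_sub,
    L1.norm_of_fun_eq_integral_norm]
  rfl
end

section
/- Let ψ be a complex-valued Schwartz function on ℝ and define the Wigner–Ville function W(x,p) := (2π)^(-1/2) ∫ conj(ψ(x + y/2)) * ψ(x - y/2) * Complex.exp(I * p * y) dy. Then for all s, t ∈ ℝ, the Fourier transform of W equals the α = 0 hashed expression of the canonical pair: (2π)^(-1) ∫ ( ∫ Complex.exp(-I * (s*p + t*x)) * W(x,p) dx ) dp = (2π)^(-1/2) ∫ Complex.exp(-I * t * x) * conj(ψ(x + s/2)) * ψ(x - s/2) dx, where the left-hand side is the iterated integral taken first in x and then in p, and all the integrals involved are absolutely convergent. The right-hand side is the inner product ⟨e^{isp̂/2}ψ, e^{-itx̂} e^{-isp̂/2}ψ⟩, since e^{-iap̂} acts by translation, (e^{-iap̂}ψ)(x) = ψ(x - a), and e^{-itx̂} by multiplication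 with e^{-itx}. -/
/-!
In the variables `a = x + y/2`, `b = x - y/2` (a measure-preserving change of variables of `ℝ²`)
the phase `e^{-i(sp+tx)} e^{ipy}` splits as a product of a phase in `a` and a phase in `b`, so the
`x`-integral of `e^{-i(sp+tx)} W(x,p)` factors as `e^{-isp} conj(ψ̂(p - t/2)) ψ̂(p + t/2)`, with
`ψ̂` the Fourier transform in angular frequency. This is integrable in `p`, and its `p`-integral is
Plancherel's identity `∫ conj (𝓕 f) 𝓕 g = ∫ conj f g` for the modulated translates
`f x = e^{itx/2} ψ(x + s/2)` and `g x = e^{-itx/2} ψ(x - s/2)`.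
-/

open MeasureTheory

/-- The (normalised) Wigner–Ville function of a Schwartz function `ψ`:
`WV ψ x p = (2π)^(-1/2) ∫ conj (ψ (x + y/2)) * ψ (x - y/2) * exp (i p y) dy`. -/
noncomputable def WV (ψ : SchwartzMap ℝ ℂ) (x p : ℝ) : ℂ :=
  (((2 * Real.pi) ^ (-(1 / 2) : ℝ) : ℝ) : ℂ) *
    ∫ y : ℝ, (starRingEnd ℂ) (ψ (x + y / 2)) * ψ (x - y / 2) *
      Complex.exp (Complex.I * (p : ℂ) * (y : ℂ))

open Real FourierTransform Complex ComplexConjugate SchwartzMap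

theorem MeasureTheory.Integrable.fourierChar_smul {α E : Type*} [MeasurableSpace α]
    {μ : Measure α} [NormedAddCommGroup E] [NormedSpace ℂ E] {f : α → E} (hf : Integrable f μ)
    {φ : α → ℝ} (hφ : Measurable φ) : Integrable (fun x ↦ 𝐞 (φ x) • f x) μ := by
  have hm : Measurable fun x ↦ (𝐞 (φ x) : ℂ) :=
    (continuous_subtype_val.comp continuous_fourierChar).measurable.comp hφ
  exact hf.congr' (hm.aestronglyMeasurable.smul hf.aestronglyMeasurable)
    (ae_of_all _ fun x ↦ (Circle.norm_smul _ _).symm)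

theorem Real.conj_fourierChar_smul_mul_fourierChar_smul (a b : ℝ) (z w : ℂ) :
    conj (𝐞 a • z) * (𝐞 b • w) = 𝐞 (b - a) • (conj z * w) := by
  simp only [Circle.smul_def, smul_eq_mul, map_mul, ← Circle.coe_inv_eq_conj,
    ← AddChar.map_neg_eq_inv, sub_eq_neg_add, AddChar.map_add_eq_mul, Circle.coe_mul]
  ring

theorem Real.fourierChar_div_two_pi (r : ℝ) : (𝐞 (r / (2 * π)) : ℂ) = Complex.exp (r * I) := by
  rw [fourierChar_apply, mul_div_cancel₀ _ (by positivity)]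

theorem Real.fourierChar_neg_two_mul_div_four_pi (t x : ℝ) :
    (𝐞 (-(2 * (t / (4 * π)) * x)) : ℂ) = Complex.exp (-I * ((t * x : ℝ) : ℂ)) := by
  rw [show -(2 * (t / (4 * π)) * x) = -(t * x) / (2 * π) by field_simp; ring,
    fourierChar_div_two_pi]
  congr 1
  push_cast
  ring

theorem SchwartzMap.integrable_conj_comp_add_mul_comp_sub (ψ : 𝓢(ℝ, ℂ)) (a : ℝ) :
    Integrable fun x ↦ conj (ψ (x + a)) * ψ (x - a) :=
  (ψ.integrable.comp_sub_right a).bdd_mul (by fun_prop)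
    (ae_of_all _ fun x ↦ by simpa using ψ.norm_le_seminorm ℝ (x + a))

theorem measurePreserving_add_half_sub_half :
    MeasurePreserving (fun z : ℝ × ℝ ↦ (z.1 + z.2 / 2, z.1 - z.2 / 2)) := by
  have shear : MeasurePreserving (fun z : ℝ × ℝ ↦ (z.1, z.2 + z.1 / 2)) := by
    rw [Measure.volume_eq_prod]
    exact (MeasurePreserving.id volume).skew_product (by fun_prop)
      (ae_of_all _ fun x ↦ map_add_right_eq_self volume (x / 2))
  have reflect : MeasurePreserving (fun z : ℝ × ℝ ↦ (z.1, z.1 - z.2)) := by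
    rw [Measure.volume_eq_prod]
    exact (MeasurePreserving.id volume).skew_product (by fun_prop)
      (ae_of_all _ fun x ↦ Measure.map_sub_left_eq_self volume x)
  have swap : MeasurePreserving (Prod.swap : ℝ × ℝ → ℝ × ℝ) := by
    rw [Measure.volume_eq_prod]
    exact Measure.measurePreserving_swap
  convert reflect.comp (swap.comp (shear.comp swap)) using 1
  funext z
  simp only [Function.comp_apply, Prod.fst_swap, Prod.snd_swap, Prod.swap_prod_mk]
  congr 1
  ring

theorem measurableEmbedding_add_half_sub_half :
    MeasurableEmbedding (fun z : ℝ × ℝ ↦ (z.1 + z.2 / 2, z.1 - z.2 / 2)) :=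
  (by fun_prop : Continuous _).measurableEmbedding fun z w h ↦ by
    simp only [Prod.mk.injEq] at h
    ext <;> linarith [h.1, h.2]

theorem integrable_conj_comp_add_half_mul_comp_sub_half {f g : ℝ → ℂ} (hf : Integrable f)
    (hg : Integrable g) :
    Integrable fun z : ℝ × ℝ ↦ conj (f (z.1 + z.2 / 2)) * g (z.1 - z.2 / 2) := by
  have h : Integrable fun w : ℝ × ℝ ↦ conj (f w.1) * g w.2 := by
    rw [Measure.volume_eq_prod]
    exact (conjCLE.toContinuousLinearMap.integrable_comp hf).mul_prod hg
  exact (measurePreserving_add_half_sub_half.integrable_comp_emb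
    measurableEmbedding_add_half_sub_half).2 h

theorem integral_conj_comp_add_half_mul_comp_sub_half (f g : ℝ → ℂ) :
    ∫ z : ℝ × ℝ, conj (f (z.1 + z.2 / 2)) * g (z.1 - z.2 / 2) =
      conj (∫ a, f a) * ∫ b, g b := by
  rw [measurePreserving_add_half_sub_half.integral_comp measurableEmbedding_add_half_sub_half
    (fun w ↦ conj (f w.1) * g w.2), Measure.volume_eq_prod,
    integral_prod_mul (fun a ↦ conj (f a)), integral_conj]

-- With `p = 2πξ` and `t = 4πτ`, the phase `e^{-i(sp+tx)} e^{ipy}` equals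
-- `𝐞(-sξ) · conj 𝐞(-a(ξ-τ)) · 𝐞(-b(ξ+τ))` for `a = x + y/2`, `b = x - y/2`.
theorem cexp_mul_conj_mul_mul_cexp_eq_fourierChar_smul (s t p x y : ℝ) (z w : ℂ) :
    Complex.exp (-I * ((s * p + t * x : ℝ) : ℂ)) * (conj z * w * Complex.exp (I * p * y)) =
      𝐞 (-(s * (p / (2 * π)))) •
        (conj (𝐞 (-((x + y / 2) * (p / (2 * π) - t / (4 * π)))) • z) *
          (𝐞 (-((x - y / 2) * (p / (2 * π) + t / (4 * π)))) • w)) := by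
  rw [conj_fourierChar_smul_mul_fourierChar_smul, smul_smul, ← AddChar.map_add_eq_mul,
    Circle.smul_def, smul_eq_mul]
  have hexponent : -(s * (p / (2 * π))) + (-((x - y / 2) * (p / (2 * π) + t / (4 * π))) -
      -((x + y / 2) * (p / (2 * π) - t / (4 * π)))) = (-(s * p + t * x) + p * y) / (2 * π) := by
    field_simp; ring
  rw [hexponent, fourierChar_div_two_pi, show ((-(s * p + t * x) + p * y : ℝ) : ℂ) * I =
    -I * ((s * p + t * x : ℝ) : ℂ) + I * p * y by push_cast; ring, Complex.exp_add]
  ring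

theorem integrable_cexp_mul_WV_and_integral_eq (ψ : 𝓢(ℝ, ℂ)) (s t p : ℝ) :
    (Integrable fun x ↦ Complex.exp (-I * ((s * p + t * x : ℝ) : ℂ)) * WV ψ x p) ∧
      ∫ x, Complex.exp (-I * ((s * p + t * x : ℝ) : ℂ)) * WV ψ x p =
        (((2 * π) ^ (-(1 / 2) : ℝ) : ℝ) : ℂ) * 𝐞 (-(s * (p / (2 * π)))) •
          (conj (𝓕 ⇑ψ (p / (2 * π) - t / (4 * π))) * 𝓕 ⇑ψ (p / (2 * π) + t / (4 * π))) := by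
  set f : ℝ → ℂ := fun a ↦ 𝐞 (-(a * (p / (2 * π) - t / (4 * π)))) • ψ a
  set g : ℝ → ℂ := fun b ↦ 𝐞 (-(b * (p / (2 * π) + t / (4 * π)))) • ψ b
  have hfg := integrable_conj_comp_add_half_mul_comp_sub_half
    (ψ.integrable.fourierChar_smul (by fun_prop) : Integrable f)
    (ψ.integrable.fourierChar_smul (by fun_prop) : Integrable g)
  have hWV (x : ℝ) : Complex.exp (-I * ((s * p + t * x : ℝ) : ℂ)) * WV ψ x p =
      (((2 * π) ^ (-(1 / 2) : ℝ) : ℝ) : ℂ) * 𝐞 (-(s * (p / (2 * π)))) •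
        ∫ y, conj (f (x + y / 2)) * g (x - y / 2) := by
    rw [WV, mul_left_comm, Circle.smul_def, ← integral_smul, ← integral_const_mul]
    congr 2 with y
    exact cexp_mul_conj_mul_mul_cexp_eq_fourierChar_smul s t p x y _ _
  have hint : ∫ x, ∫ y, conj (f (x + y / 2)) * g (x - y / 2) =
      conj (𝓕 ⇑ψ (p / (2 * π) - t / (4 * π))) * 𝓕 ⇑ψ (p / (2 * π) + t / (4 * π)) := by
    rw [fourier_real_eq, fourier_real_eq, ← integral_conj_comp_add_half_mul_comp_sub_half,
      Measure.volume_eq_prod, integral_prod _ hfg]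
  simp_rw [hWV]
  refine ⟨(hfg.integral_prod_left.smul _).const_mul _, ?_⟩
  simp only [Circle.smul_def]
  rw [integral_const_mul, integral_smul, hint]

theorem Real.fourier_fourierChar_smul_comp_add {E : Type*} [NormedAddCommGroup E]
    [NormedSpace ℂ E] (f : ℝ → E) (τ a ξ : ℝ) :
    𝓕 (fun x ↦ 𝐞 (τ * x) • f (x + a)) ξ = 𝐞 (a * (ξ - τ)) • 𝓕 f (ξ - τ) := by
  simp only [fourier_real_eq, Circle.smul_def, ← integral_smul]
  conv_rhs => rw [← integral_add_right_eq_self _ a]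
  congr 1 with v
  simp only [smul_smul, ← Circle.coe_mul, ← AddChar.map_add_eq_mul]
  congr 3
  ring

theorem Real.integral_conj_fourier_mul_fourier {V : Type*} [NormedAddCommGroup V]
    [InnerProductSpace ℝ V] [FiniteDimensional ℝ V] [MeasurableSpace V] [BorelSpace V]
    {f g : V → ℂ} (hf : Integrable f) (hg : Integrable g) (hgc : Continuous g)
    (hFg : Integrable (𝓕 g)) :
    ∫ ξ, conj (𝓕 f ξ) * 𝓕 g ξ = ∫ x, conj (f x) * g x := by
  have h := VectorFourier.integral_sesq_fourierIntegral_eq_neg_flip (innerSL ℂ)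
    (L := innerₗ V) continuous_fourierChar continuous_inner hf hFg
  have hflip : -(innerₗ V).flip = -innerₗ V := by
    ext x y; simp
  rw [hflip] at h
  have hinv : VectorFourier.fourierIntegral 𝐞 volume (-innerₗ V) (𝓕 g) = g :=
    hgc.fourierInv_fourier_eq hg hFg
  simp only [hinv, innerSL_apply_apply, RCLike.inner_apply] at h
  simp_rw [mul_comm (conj _)]
  exact h

theorem Real.integral_fourierChar_smul_conj_fourier_sub_mul_fourier_add {ψ : ℝ → ℂ}
    (hψ : Integrable ψ) (hψc : Continuous ψ) (hFψ : Integrable (𝓕 ψ)) (s τ : ℝ) :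
    ∫ ξ, 𝐞 (-(s * ξ)) • (conj (𝓕 ψ (ξ - τ)) * 𝓕 ψ (ξ + τ)) =
      ∫ x, 𝐞 (-(2 * τ * x)) • (conj (ψ (x + s / 2)) * ψ (x - s / 2)) := by
  have hFf (ξ : ℝ) : 𝓕 (fun x ↦ 𝐞 (τ * x) • ψ (x + s / 2)) ξ =
      𝐞 (s / 2 * (ξ - τ)) • 𝓕 ψ (ξ - τ) :=
    fourier_fourierChar_smul_comp_add ψ τ (s / 2) ξ
  have hFg (ξ : ℝ) : 𝓕 (fun x ↦ 𝐞 (-τ * x) • ψ (x + -(s / 2))) ξ =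
      𝐞 (-(s / 2) * (ξ + τ)) • 𝓕 ψ (ξ + τ) := by
    rw [fourier_fourierChar_smul_comp_add, sub_neg_eq_add]
  have hf : Integrable fun x ↦ 𝐞 (τ * x) • ψ (x + s / 2) :=
    (hψ.comp_add_right _).fourierChar_smul (by fun_prop)
  have hg : Integrable fun x ↦ 𝐞 (-τ * x) • ψ (x + -(s / 2)) :=
    (hψ.comp_add_right _).fourierChar_smul (by fun_prop)
  have hFg_int : Integrable (𝓕 (fun x ↦ 𝐞 (-τ * x) • ψ (x + -(s / 2)))) := by
    rw [funext hFg]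
    exact (hFψ.comp_add_right τ).fourierChar_smul (by fun_prop)
  calc ∫ ξ, 𝐞 (-(s * ξ)) • (conj (𝓕 ψ (ξ - τ)) * 𝓕 ψ (ξ + τ))
      = ∫ ξ, conj (𝓕 (fun x ↦ 𝐞 (τ * x) • ψ (x + s / 2)) ξ) *
          𝓕 (fun x ↦ 𝐞 (-τ * x) • ψ (x + -(s / 2))) ξ := by
        congr 1 with ξ
        rw [hFf, hFg, conj_fourierChar_smul_mul_fourierChar_smul]
        congr 2; ring
    _ = ∫ x, conj (𝐞 (τ * x) • ψ (x + s / 2)) * (𝐞 (-τ * x) • ψ (x + -(s / 2))) :=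
        integral_conj_fourier_mul_fourier hf hg (by fun_prop) hFg_int
    _ = _ := by
        congr 1 with x
        rw [conj_fourierChar_smul_mul_fourierChar_smul, ← sub_eq_add_neg]
        congr 2; ring

theorem SchwartzMap.integrable_fourierChar_smul_conj_fourier_sub_mul_fourier_add (ψ : 𝓢(ℝ, ℂ))
    (s τ : ℝ) : Integrable fun ξ ↦ 𝐞 (-(s * ξ)) • (conj (𝓕 ⇑ψ (ξ - τ)) * 𝓕 ⇑ψ (ξ + τ)) := by
  have h := (𝓕 ψ).integrable_conj_comp_add_mul_comp_sub (-τ)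
  simp only [fourier_coe, ← sub_eq_add_neg, sub_neg_eq_add] at h
  exact h.fourierChar_smul (by fun_prop)

/-- The Fourier transform of the Wigner–Ville distribution equals the `α = 0`
hashed expression `⟨e^{isp̂/2}ψ, e^{-itx̂} e^{-isp̂/2}ψ⟩` of the canonical pair;
all integrals involved are absolutely convergent. -/
theorem stmt_13 (ψ : SchwartzMap ℝ ℂ) (s t : ℝ) :
    (∀ p : ℝ, Integrable fun x : ℝ =>
        Complex.exp (-Complex.I * ((s * p + t * x : ℝ) : ℂ)) * WV ψ x p) ∧
    Integrable (fun p : ℝ =>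
        ∫ x : ℝ, Complex.exp (-Complex.I * ((s * p + t * x : ℝ) : ℂ)) * WV ψ x p) ∧
    Integrable (fun x : ℝ =>
        Complex.exp (-Complex.I * ((t * x : ℝ) : ℂ)) *
          (starRingEnd ℂ) (ψ (x + s / 2)) * ψ (x - s / 2)) ∧
    ((((2 * Real.pi)⁻¹ : ℝ)) : ℂ) *
        (∫ p : ℝ, ∫ x : ℝ, Complex.exp (-Complex.I * ((s * p + t * x : ℝ) : ℂ)) * WV ψ x p)
      = (((2 * Real.pi) ^ (-(1 / 2) : ℝ) : ℝ) : ℂ) *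
          ∫ x : ℝ, Complex.exp (-Complex.I * ((t * x : ℝ) : ℂ)) *
            (starRingEnd ℂ) (ψ (x + s / 2)) * ψ (x - s / 2) := by
  set c : ℂ := (((2 * π) ^ (-(1 / 2) : ℝ) : ℝ) : ℂ)
  set H : ℝ → ℂ := fun ξ ↦
    𝐞 (-(s * ξ)) • (conj (𝓕 ⇑ψ (ξ - t / (4 * π))) * 𝓕 ⇑ψ (ξ + t / (4 * π)))
  have hWV := integrable_cexp_mul_WV_and_integral_eq ψ s t
  have hp : (fun p ↦ ∫ x, Complex.exp (-I * ((s * p + t * x : ℝ) : ℂ)) * WV ψ x p) =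
      fun p ↦ c * H (p / (2 * π)) := funext fun p ↦ (hWV p).2
  have hH : Integrable H := ψ.integrable_fourierChar_smul_conj_fourier_sub_mul_fourier_add s _
  have hphase (x : ℝ) : 𝐞 (-(2 * (t / (4 * π)) * x)) • (conj (ψ (x + s / 2)) * ψ (x - s / 2)) =
      Complex.exp (-I * ((t * x : ℝ) : ℂ)) * conj (ψ (x + s / 2)) * ψ (x - s / 2) := by
    rw [Circle.smul_def, smul_eq_mul, fourierChar_neg_two_mul_div_four_pi, mul_assoc]
  refine ⟨fun p ↦ (hWV p).1, hp ▸ (hH.comp_div (by positivity)).const_mul c, ?_, ?_⟩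
  · simp_rw [← hphase]
    exact (ψ.integrable_conj_comp_add_mul_comp_sub (s / 2)).fourierChar_smul (by fun_prop)
  · have hFψ : Integrable (𝓕 ⇑ψ) := fourier_coe ψ ▸ (𝓕 ψ).integrable
    rw [hp, integral_const_mul, Measure.integral_comp_div,
      integral_fourierChar_smul_conj_fourier_sub_mul_fourier_add ψ.integrable ψ.continuous hFψ]
    simp_rw [hphase]
    rw [abs_of_pos (by positivity), Complex.real_smul, mul_left_comm]
    congr 1
    rw [← mul_assoc, ← Complex.ofReal_mul, inv_mul_cancel₀ (by positivity), Complex.ofReal_one,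
      one_mul]
end

section
/- Let H be a complex Hilbert space and ψ ∈ H with ψ ≠ 0. For vectors u, v ∈ H, there exists a bounded operator X : H →L[ℂ] H with X ψ = u and (adjoint X) ψ = v if and only if ⟨ψ, u⟩ = conj(⟨ψ, v⟩). In particular, the joint range {(Xψ, X*ψ) : X ∈ B(H)} is the closed subspace {(u,v) ∈ H × H : ⟨ψ, u⟩ = conj(⟨ψ, v⟩)} of H × H. -/
open InnerProductSpace ContinuousLinearMap
open scoped InnerProductSpace

/-! Necessity is `⟪X† ψ, ψ⟫ = ⟪ψ, X ψ⟫`. For sufficiency, the operator `jointInterpolant 𝕜 ψ u v`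
below sends `ψ` to `u`, and under the compatibility condition its adjoint is the same formula with
`u` and `v` exchanged, so the adjoint sends `ψ` to `v`. -/

section

variable (𝕜 : Type*) {E : Type*} [RCLike 𝕜] [NormedAddCommGroup E] [InnerProductSpace 𝕜 E]

/-- `(|u⟩⟨ψ| + |ψ⟩⟨v|) / ‖ψ‖² - ⟪ψ, u⟫ |ψ⟩⟨ψ| / ‖ψ‖⁴`: when `⟪v, ψ⟫ = ⟪ψ, u⟫`, the last term
cancels the `ψ`-component that `|ψ⟩⟨v|` adds at `ψ`. -/
noncomputable def jointInterpolant (ψ u v : E) : E →L[𝕜] E :=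
  (‖ψ‖ ^ 2 : 𝕜)⁻¹ • (rankOne 𝕜 u ψ + rankOne 𝕜 ψ v) -
    ((‖ψ‖ ^ 2 : 𝕜)⁻¹ ^ 2 * ⟪ψ, u⟫_𝕜) • rankOne 𝕜 ψ ψ

variable {𝕜}

theorem jointInterpolant_apply_self {ψ u v : E} (hψ : ψ ≠ 0) (h : ⟪v, ψ⟫_𝕜 = ⟪ψ, u⟫_𝕜) :
    jointInterpolant 𝕜 ψ u v ψ = u := by
  have hψ' : (‖ψ‖ : 𝕜) ≠ 0 := by simpa using hψ
  simp only [jointInterpolant, sub_apply, smul_apply, add_apply, rankOne_apply,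
    inner_self_eq_norm_sq_to_K, h, smul_add, smul_smul]
  field_simp
  module

variable [CompleteSpace E]

theorem adjoint_jointInterpolant {ψ u v : E} (h : ⟪v, ψ⟫_𝕜 = ⟪ψ, u⟫_𝕜) :
    adjoint (jointInterpolant 𝕜 ψ u v) = jointInterpolant 𝕜 ψ v u := by
  have : (starRingEnd 𝕜) ⟪ψ, u⟫_𝕜 = ⟪ψ, v⟫_𝕜 := by rw [← h, inner_conj_symm]
  simp [jointInterpolant, map_smulₛₗ, this, add_comm]

theorem exists_apply_self_eq_and_adjoint_apply_self_eq_iff {ψ : E} (hψ : ψ ≠ 0) (u v : E) :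
    (∃ X : E →L[𝕜] E, X ψ = u ∧ adjoint X ψ = v) ↔ ⟪v, ψ⟫_𝕜 = ⟪ψ, u⟫_𝕜 := by
  refine ⟨fun ⟨X, hXu, hXv⟩ ↦ hXu ▸ hXv ▸ adjoint_inner_left X ψ ψ, fun h ↦ ?_⟩
  have h' : ⟪u, ψ⟫_𝕜 = ⟪ψ, v⟫_𝕜 := by rw [← inner_conj_symm, ← h, inner_conj_symm]
  exact ⟨jointInterpolant 𝕜 ψ u v, jointInterpolant_apply_self hψ h,
    by rw [adjoint_jointInterpolant h, jointInterpolant_apply_self hψ h']⟩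

end

local notation "⟪" x ", " y "⟫" => @inner ℂ _ _ x y

/-- For `ψ ≠ 0` in a complex Hilbert space `H`, a pair `(u, v)` arises as
`(X ψ, X* ψ)` for some bounded operator `X` if and only if `⟨ψ, u⟩ = conj ⟨ψ, v⟩`. -/
theorem stmt_15 {H : Type*} [NormedAddCommGroup H] [InnerProductSpace ℂ H] [CompleteSpace H]
    (ψ : H) (hψ : ψ ≠ 0) (u v : H) :
    (∃ X : H →L[ℂ] H, X ψ = u ∧ (ContinuousLinearMap.adjoint X) ψ = v) ↔
      ⟪ψ, u⟫ = (starRingEnd ℂ) ⟪ψ, v⟫ := by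
  rw [exists_apply_self_eq_and_adjoint_apply_self_eq_iff hψ, inner_conj_symm, eq_comm]
end
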